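/- arXiv:2502.01927 — 2 statements merged into one kernel-verified Lean document; each statement's English description precedes it below -/
import Mathlib

section
/- Let G be a graph, D = (B_x : x ∈ V(T)) a tree-decomposition of G in which every bag intersects every layer of a layering L in at most c vertices, and let (P_y : y ∈ V(H)) be an H-partition of G such that each part P_y is contained in the union of at most t bags of D. Then G is contained in H ⊠ P ⊠ K_{t·c} for a path P with |V(P)| equal to the number of nonempty layers of L. -/
open SimpleGraph

/-- The strong product of two simple graphs. -/
def strongProd {α β : Type} (G : SimpleGraph α) (H : SimpleGraph β) :
    SimpleGraph (α × β) where
  Adj a b := a ≠ b ∧ (a.1 = b.1 ∨ G.Adj a.1 b.1) ∧ (a.2 = b.2 ∨ H.Adj a.2 b.2)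
  symm := by
    constructor
    rintro a b ⟨h1, h2, h3⟩
    exact ⟨h1.symm, by tauto, by tauto⟩
  loopless := by constructor; rintro a ⟨h1, -⟩; exact h1 rfl

/-- `G` is contained in `H`: isomorphic to a subgraph of `H`. -/
def ContainedIn {α β : Type} (G : SimpleGraph α) (H : SimpleGraph β) : Prop :=
  ∃ f : G →g H, Function.Injective f
/-- A tree-decomposition of `G` with tree `T` and bags `B`: every vertex is in some bag,
every edge lies in a bag, and the bags containing a given vertex induce a nonempty
connected subtree of `T`. -/
def IsTreeDecomp {V ι : Type} (G : SimpleGraph V) (T : SimpleGraph ι) (B : ι → Set V) : Prop :=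
  T.IsTree ∧
  (∀ v : V, ∃ x, v ∈ B x) ∧
  (∀ ⦃v w : V⦄, G.Adj v w → ∃ x, v ∈ B x ∧ w ∈ B x) ∧
  (∀ v : V, (T.induce {x | v ∈ B x}).Connected)

/-- `G` has a tree-decomposition of width at most `k`. -/
def HasTreeDecompOfWidth {V : Type} (G : SimpleGraph V) (k : ℕ) : Prop :=
  ∃ (ι : Type) (T : SimpleGraph ι) (B : ι → Set V),
    IsTreeDecomp G T B ∧ ∀ x, (B x).ncard ≤ k + 1

/-- The treewidth of a graph: the minimum width of a tree-decomposition. -/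
noncomputable def treewidth {V : Type} (G : SimpleGraph V) : ℕ :=
  sInf {k | HasTreeDecompOfWidth G k}
/-- A layering of `G`: an assignment of layers (natural numbers) to vertices such that
the endpoints of every edge lie in the same or consecutive layers. -/
def IsLayering {V : Type} (G : SimpleGraph V) (L : V → ℕ) : Prop :=
  ∀ ⦃v w : V⦄, G.Adj v w → ((L v : ℤ) - L w).natAbs ≤ 1
/-- An `H`-partition of `G`: parts indexed by `V(H)`, each vertex in exactly one part,
and the endpoints of every edge of `G` lie in the same part or in parts adjacent in `H`. -/
def IsHPartition {V ι : Type} (G : SimpleGraph V) (H : SimpleGraph ι) (B : ι → Set V) : Prop :=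
  (∀ v : V, ∃! x, v ∈ B x) ∧
  ∀ ⦃v w : V⦄, G.Adj v w → ∀ ⦃x y : ι⦄, v ∈ B x → w ∈ B y → x = y ∨ H.Adj x y

/-- If `G` has a tree-decomposition whose bags meet every layer of a layering in at most `c`
vertices, and an `H`-partition each of whose parts is covered by at most `t` bags, then `G`
is contained in `H ⊠ P ⊠ K_{t·c}` for a path `P` whose number of vertices equals the number
of nonempty layers. -/
theorem stmt12 {V ι κ : Type} [Fintype V] (G : SimpleGraph V)
    (T : SimpleGraph ι) (B : ι → Set V) (hD : IsTreeDecomp G T B)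
    (L : V → ℕ) (hL : IsLayering G L)
    (c : ℕ) (hc : ∀ (x : ι) (i : ℕ), (B x ∩ {v | L v = i}).ncard ≤ c)
    (H : SimpleGraph κ) (P : κ → Set V) (hP : IsHPartition G H P)
    (t : ℕ) (ht : ∀ y : κ, ∃ s : Finset ι, s.card ≤ t ∧ P y ⊆ ⋃ x ∈ s, B x) :
    ContainedIn G
      (strongProd (strongProd H (pathGraph ({i : ℕ | ∃ v, L v = i}.ncard)))
        (completeGraph (Fin (t * c)))) := by
  classical
  obtain ⟨huniq, hadjP⟩ := hP
  choose y hy hyu using huniq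
  -- the finset of nonempty layers
  set S : Finset ℕ := Finset.image L Finset.univ with hS
  have hmemS : ∀ v : V, L v ∈ S := fun v => Finset.mem_image_of_mem L (Finset.mem_univ v)
  have hN : {i : ℕ | ∃ v, L v = i}.ncard = S.card := by
    have : {i : ℕ | ∃ v, L v = i} = ↑S := by
      ext i; simp [hS, Finset.mem_image, eq_comm]
    rw [this, Set.ncard_coe_finset]
  -- rank of a layer
  set rank : ℕ → ℕ := fun i => (S.filter (· < i)).card with hrankdef
  have hrank_lt : ∀ i ∈ S, rank i < S.card := by
    intro i hi
    apply Finset.card_lt_card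
    refine ⟨Finset.filter_subset _ _, fun hsub => ?_⟩
    have := hsub hi
    simp at this
  have hrank_mono : ∀ i j : ℕ, i ∈ S → i < j → rank i < rank j := by
    intro i j hi hij
    apply Finset.card_lt_card
    constructor
    · intro a ha
      simp only [Finset.mem_filter] at ha ⊢
      exact ⟨ha.1, ha.2.trans hij⟩
    · intro hsub
      have h2 := hsub (Finset.mem_filter.mpr ⟨hi, hij⟩)
      rw [Finset.mem_filter] at h2
      exact absurd h2.2 (lt_irrefl i)
  have hrank_inj : ∀ i j : ℕ, i ∈ S → j ∈ S → rank i = rank j → i = j := by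
    intro i j hi hj hr
    rcases lt_trichotomy i j with h | h | h
    · exact absurd hr (Nat.ne_of_lt (hrank_mono i j hi h))
    · exact h
    · exact absurd hr.symm (Nat.ne_of_lt (hrank_mono j i hj h))
  have hrank_succ : ∀ i : ℕ, i ∈ S → rank (i + 1) = rank i + 1 := by
    intro i hi
    have : S.filter (· < i + 1) = insert i (S.filter (· < i)) := by
      ext j
      simp only [Finset.mem_filter, Finset.mem_insert, Nat.lt_succ_iff_lt_or_eq]
      constructor
      · rintro ⟨hj, hlt | rfl⟩
        · exact Or.inr ⟨hj, hlt⟩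
        · exact Or.inl rfl
      · rintro (rfl | ⟨hj, hlt⟩)
        · exact ⟨hi, Or.inr rfl⟩
        · exact ⟨hj, Or.inl hlt⟩
    rw [hrankdef]
    simp only [this]
    rw [Finset.card_insert_of_notMem (by simp)]
  -- parts-within-layers
  set Q : κ → ℕ → Set V := fun a i => P a ∩ {v | L v = i} with hQdef
  have hQcard : ∀ (a : κ) (i : ℕ), (Q a i).ncard ≤ t * c := by
    intro a i
    obtain ⟨s, hs, hsub⟩ := ht a
    have hsub2 : Q a i ⊆ ⋃ x ∈ s, (B x ∩ {v | L v = i}) := by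
      rintro v ⟨hv1, hv2⟩
      have := hsub hv1
      simp only [Set.mem_iUnion] at this ⊢
      obtain ⟨x, hx, hvx⟩ := this
      exact ⟨x, hx, hvx, hv2⟩
    have hbound : ∀ s' : Finset ι, ((⋃ x ∈ s', (B x ∩ {v | L v = i})).ncard ≤ s'.card * c) := by
      intro s'
      induction s' using Finset.induction with
      | empty => simp
      | @insert z s' hz ih =>
        rw [Finset.card_insert_of_notMem hz]
        have : (⋃ x ∈ insert z s', (B x ∩ {v | L v = i}))
            = (B z ∩ {v | L v = i}) ∪ ⋃ x ∈ s', (B x ∩ {v | L v = i}) := by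
          simp [Set.biUnion_insert]
        rw [this]
        calc ((B z ∩ {v | L v = i}) ∪ ⋃ x ∈ s', (B x ∩ {v | L v = i})).ncard
            ≤ (B z ∩ {v | L v = i}).ncard + (⋃ x ∈ s', (B x ∩ {v | L v = i})).ncard :=
              Set.ncard_union_le _ _
          _ ≤ c + s'.card * c := add_le_add (hc z i) ih
          _ = (s'.card + 1) * c := by ring
    calc (Q a i).ncard ≤ (⋃ x ∈ s, (B x ∩ {v | L v = i})).ncard :=
          Set.ncard_le_ncard hsub2 (Set.toFinite _)
      _ ≤ s.card * c := hbound s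
      _ ≤ t * c := Nat.mul_le_mul_right c hs
  -- injective labels within each Q a i
  have hglabel : ∀ (a : κ) (i : ℕ), Nonempty ((Q a i : Set V) ↪ Fin (t * c)) := by
    intro a i
    apply Function.Embedding.nonempty_of_card_le
    rw [Fintype.card_fin, ← Nat.card_eq_fintype_card, Nat.card_coe_set_eq]
    exact hQcard a i
  set g : ∀ (a : κ) (i : ℕ), (Q a i : Set V) ↪ Fin (t * c) := fun a i => (hglabel a i).some with hgdef
  have hvQ : ∀ v : V, v ∈ Q (y v) (L v) := fun v => ⟨hy v, rfl⟩
  -- the main map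
  set N := {i : ℕ | ∃ v, L v = i}.ncard with hNdef
  have hrankN : ∀ v : V, rank (L v) < N := fun v => by
    rw [hN]; exact hrank_lt _ (hmemS v)
  set f : V → (κ × Fin N) × Fin (t * c) :=
    fun v => ((y v, ⟨rank (L v), hrankN v⟩), g (y v) (L v) ⟨v, hvQ v⟩) with hfdef
  have hgcongr : ∀ (v w : V) (a b : κ) (i j : ℕ) (hv : v ∈ Q a i) (hw : w ∈ Q b j),
      a = b → i = j → g a i ⟨v, hv⟩ = g b j ⟨w, hw⟩ → v = w := by
    rintro v w a b i j hv hw rfl rfl hgw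
    exact congrArg Subtype.val ((g a i).injective hgw)
  have hfinj : Function.Injective f := by
    intro v w hvw
    rw [hfdef] at hvw
    simp only [Prod.mk.injEq] at hvw
    obtain ⟨⟨h1, h2⟩, h3⟩ := hvw
    have hL' : L v = L w := hrank_inj _ _ (hmemS v) (hmemS w) (congrArg Fin.val h2)
    exact hgcongr v w _ _ _ _ (hvQ v) (hvQ w) h1 hL' h3
  refine ⟨⟨f, ?_⟩, hfinj⟩
  intro v w hvw
  have hne : f v ≠ f w := fun h => (G.ne_of_adj hvw) (hfinj h)
  have hy1 : y v = y w ∨ H.Adj (y v) (y w) := hadjP hvw (hy v) (hy w)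
  have hlay : L v = L w ∨ L v + 1 = L w ∨ L w + 1 = L v := by
    have := hL hvw; omega
  have hpath : (⟨rank (L v), hrankN v⟩ : Fin N) = ⟨rank (L w), hrankN w⟩ ∨
      (pathGraph N).Adj ⟨rank (L v), hrankN v⟩ ⟨rank (L w), hrankN w⟩ := by
    rcases hlay with h | h | h
    · exact Or.inl (by simp [h])
    · refine Or.inr (pathGraph_adj.mpr (Or.inl ?_))
      simp only
      rw [← h, hrank_succ _ (hmemS v)]
    · refine Or.inr (pathGraph_adj.mpr (Or.inr ?_))
      simp only
      rw [← h, hrank_succ _ (hmemS w)]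
  refine ⟨hne, ?_, ?_⟩
  · -- first coordinate: equal or adjacent in H ⊠ pathGraph
    rcases hy1 with hy1 | hy1
    · rcases hpath with hp | hp
      · exact Or.inl (by rw [hfdef]; simp [hy1, hp])
      · refine Or.inr ⟨?_, Or.inl hy1, Or.inr hp⟩
        rw [hfdef]
        simp only [ne_eq, Prod.mk.injEq, not_and]
        intro _
        exact fun h => (pathGraph N).ne_of_adj hp h
    · refine Or.inr ⟨?_, Or.inr hy1, hpath⟩
      rw [hfdef]
      simp only [ne_eq, Prod.mk.injEq, not_and]
      intro h
      exact absurd h (H.ne_of_adj hy1)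
  · -- second coordinate: complete graph, trivial
    by_cases hlab : (f v).2 = (f w).2
    · exact Or.inl hlab
    · exact Or.inr hlab
end

section
/- Let G be an n-vertex graph that is an r-shallow minor of Q ⊠ K_ℓ for a graph Q, where the branch sets witnessing the shallow minor are chosen minimally and edges of G correspond to paths in Q ⊠ K_ℓ with at most 2r internal vertices. If G has m edges, then Q can be chosen with |V(Q)| ≤ n + 2r·m. -/
open SimpleGraph

/-- `G` is an `r`-shallow minor of `H`: there are pairwise disjoint nonempty connected
branch sets of radius at most `r`, one for each vertex of `G`, such that each edge of `G`
is realised by an edge of `H` between the corresponding branch sets. -/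
def IsShallowMinor (r : ℕ) {α β : Type} (G : SimpleGraph α) (H : SimpleGraph β) : Prop :=
  ∃ B : α → Set β,
    (∀ v, (B v).Nonempty) ∧
    (Pairwise fun v w => Disjoint (B v) (B w)) ∧
    (∀ v, (H.induce (B v)).Connected) ∧
    (∀ v, ∃ c : β, ∃ hc : c ∈ B v, ∀ u : β, ∀ hu : u ∈ B v,
      (H.induce (B v)).dist ⟨c, hc⟩ ⟨u, hu⟩ ≤ r) ∧
    (∀ ⦃v w⦄, G.Adj v w → ∃ a ∈ B v, ∃ b ∈ B w, H.Adj a b)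

/-! ### Auxiliary lemmas -/

lemma walk_transfer {β : Type} {H : SimpleGraph β} {A : Set β} :
    ∀ {a b : β} (p : H.Walk a b), (∀ z ∈ p.support, z ∈ A) →
    ∀ (ha : a ∈ A) (hb : b ∈ A),
      ∃ q : (H.induce A).Walk ⟨a, ha⟩ ⟨b, hb⟩, q.length = p.length := by
  intro a b p
  induction p with
  | nil => intro _ ha hb; exact ⟨Walk.nil, rfl⟩
  | cons h' p ih =>
    rename_i u v w
    intro hp ha hb
    have hx : v ∈ A := hp v (by simp)
    obtain ⟨q, hq⟩ := ih (fun z hz => hp z (by simp [hz])) hx hb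
    exact ⟨Walk.cons (by simpa using h') q, by simp [hq]⟩

@[simp] lemma strongProd_adj {α β : Type} (G : SimpleGraph α) (H : SimpleGraph β)
    (a b : α × β) : (strongProd G H).Adj a b ↔
      a ≠ b ∧ (a.1 = b.1 ∨ G.Adj a.1 b.1) ∧ (a.2 = b.2 ∨ H.Adj a.2 b.2) := Iff.rfl

lemma dist_le_of_reachable_iso' {β1 β2 : Type} {H1 : SimpleGraph β1} {H2 : SimpleGraph β2}
    (φ : H1 ≃g H2) {a b : β1} (h : H1.Reachable a b) :
    H2.dist (φ a) (φ b) ≤ H1.dist a b := by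
  obtain ⟨p, hp⟩ := h.exists_walk_length_eq_dist
  calc H2.dist (φ a) (φ b) ≤ (p.map φ.toHom).length := dist_le _
    _ = H1.dist a b := by simp [hp]

noncomputable def induceIso' {β1 β2 : Type} {H1 : SimpleGraph β1} {H2 : SimpleGraph β2}
    (φ : H1 ≃g H2) (A : Set β1) : H1.induce A ≃g H2.induce ((φ : β1 → β2) '' A) where
  toEquiv := Equiv.Set.image φ A φ.toEquiv.injective
  map_rel_iff' := by
    intro a b
    simp [Equiv.Set.image, Equiv.Set.imageOfInjOn, comap_adj, φ.map_rel_iff]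

lemma isShallowMinor_of_iso {α β1 β2 : Type} {r : ℕ} {G : SimpleGraph α}
    {H1 : SimpleGraph β1} {H2 : SimpleGraph β2} (φ : H1 ≃g H2)
    (h : IsShallowMinor r G H1) : IsShallowMinor r G H2 := by
  obtain ⟨B, hne, hdisj, hconn, hrad, hedge⟩ := h
  refine ⟨fun v => (φ : β1 → β2) '' B v, fun v => (hne v).image _,
    fun v w hvw => (Set.disjoint_image_iff φ.toEquiv.injective).mpr (hdisj hvw), ?_, ?_, ?_⟩
  · intro v
    exact ((induceIso' φ (B v)).connected_iff).mp (hconn v)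
  · intro v
    obtain ⟨c, hc, hdist⟩ := hrad v
    refine ⟨φ c, ⟨c, hc, rfl⟩, ?_⟩
    rintro u ⟨u', hu', rfl⟩
    have := dist_le_of_reachable_iso' (induceIso' φ (B v)) ((hconn v) ⟨c, hc⟩ ⟨u', hu'⟩)
    exact le_trans this (hdist u' hu')
  · intro v w hvw
    obtain ⟨a, ha, b, hb, hab⟩ := hedge hvw
    exact ⟨φ a, ⟨a, ha, rfl⟩, φ b, ⟨b, hb, rfl⟩, φ.map_rel_iff.mpr hab⟩

/-- restriction iso for nested induced subgraphs -/
def nestIso {β : Type} (H : SimpleGraph β) (S A : Set β) (hAS : A ⊆ S) :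
    H.induce A ≃g (H.induce S).induce (Subtype.val ⁻¹' A : Set S) where
  toEquiv :=
  { toFun := fun x => ⟨⟨x.1, hAS x.2⟩, x.2⟩
    invFun := fun x => ⟨x.1.1, x.2⟩
    left_inv := fun x => rfl
    right_inv := fun x => rfl }
  map_rel_iff' := by intro a b; simp [comap_adj]

lemma isShallowMinor_induce {α β : Type} {r : ℕ} {G : SimpleGraph α} {H : SimpleGraph β}
    {S : Set β} (B : α → Set β) (hBS : ∀ v, B v ⊆ S)
    (hne : ∀ v, (B v).Nonempty)
    (hdisj : Pairwise fun v w => Disjoint (B v) (B w))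
    (hconn : ∀ v, (H.induce (B v)).Connected)
    (hrad : ∀ v, ∃ c : β, ∃ hc : c ∈ B v, ∀ u : β, ∀ hu : u ∈ B v,
      (H.induce (B v)).dist ⟨c, hc⟩ ⟨u, hu⟩ ≤ r)
    (hedge : ∀ ⦃v w⦄, G.Adj v w → ∃ a ∈ B v, ∃ b ∈ B w, H.Adj a b) :
    IsShallowMinor r G (H.induce S) := by
  refine ⟨fun v => Subtype.val ⁻¹' (B v), ?_, ?_, ?_, ?_, ?_⟩
  · intro v
    obtain ⟨x, hx⟩ := hne v
    exact ⟨⟨x, hBS v hx⟩, hx⟩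
  · intro v w hvw
    have : Disjoint (B v) (B w) := hdisj hvw
    simp only [Set.disjoint_left] at this ⊢
    intro x hx hx'
    exact this hx hx'
  · intro v
    exact ((nestIso H S (B v) (hBS v)).connected_iff).mp (hconn v)
  · intro v
    obtain ⟨c, hc, hdist⟩ := hrad v
    refine ⟨⟨c, hBS v hc⟩, hc, ?_⟩
    rintro ⟨u, huS⟩ hu
    have := dist_le_of_reachable_iso' (nestIso H S (B v) (hBS v))
      ((hconn v) ⟨c, hc⟩ ⟨u, hu⟩)
    exact le_trans this (hdist u hu)
  · intro v w hvw
    obtain ⟨a, ha, b, hb, hab⟩ := hedge hvw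
    exact ⟨⟨a, hBS v ha⟩, ha, ⟨b, hBS w hb⟩, hb, hab⟩

def strongProdInduceIso {γ δ : Type} (Q : SimpleGraph γ) (K : SimpleGraph δ) (s : Set γ) :
    strongProd (Q.induce s) K ≃g (strongProd Q K).induce {p : γ × δ | p.1 ∈ s} where
  toEquiv :=
  { toFun := fun a => ⟨(a.1.1, a.2), a.1.2⟩
    invFun := fun p => (⟨p.1.1, p.2⟩, p.1.2)
    left_inv := fun a => rfl
    right_inv := fun p => rfl }
  map_rel_iff' := by
    rintro ⟨⟨a, ha⟩, i⟩ ⟨⟨b, hb⟩, j⟩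
    simp only [comap_adj, Function.Embedding.coe_subtype, strongProd_adj, Equiv.coe_fn_mk]
    constructor
    · rintro ⟨h1, h2, h3⟩
      refine ⟨?_, ?_, h3⟩
      · intro hh
        apply h1
        obtain ⟨hh1, hh2⟩ := Prod.ext_iff.mp hh
        exact Prod.ext (congrArg Subtype.val hh1) hh2
      · rcases h2 with h | h
        · exact Or.inl (Subtype.ext h)
        · exact Or.inr h
    · rintro ⟨h1, h2, h3⟩
      refine ⟨?_, ?_, h3⟩
      · intro hh
        apply h1
        obtain ⟨hh1, hh2⟩ := Prod.ext_iff.mp hh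
        exact Prod.ext (Subtype.ext hh1) hh2
      · rcases h2 with h | h
        · exact Or.inl (Subtype.ext_iff.mp h)
        · exact Or.inr h

/-- If an `n`-vertex graph `G` with `m` edges is an `r`-shallow minor of `Q ⊠ K_ℓ`,
then `Q` can be replaced by one of its induced subgraphs on at most `n + 2·r·m` vertices. -/
theorem stmt15 {α γ : Type} [Fintype α] [DecidableEq α]
    (G : SimpleGraph α) [DecidableRel G.Adj]
    (n m r ℓ : ℕ) (hn : Fintype.card α = n) (hm : G.edgeFinset.card = m)
    (Q : SimpleGraph γ)
    (h : IsShallowMinor r G (strongProd Q (completeGraph (Fin ℓ)))) :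
    ∃ s : Set γ, s.ncard ≤ n + 2 * r * m ∧
      IsShallowMinor r G (strongProd (Q.induce s) (completeGraph (Fin ℓ))) := by
  classical
  set β := γ × Fin ℓ with hβ
  set H := strongProd Q (completeGraph (Fin ℓ)) with hH
  obtain ⟨B, hne, hdisj, hconn, hrad, hedge⟩ := h
  -- centers
  choose c hc hcd using hrad
  -- edge endpoints
  have key : ∀ v w, G.Adj v w → ∃ ab : β × β, ab.1 ∈ B v ∧ ab.2 ∈ B w ∧ H.Adj ab.1 ab.2 := by
    intro v w hvw
    obtain ⟨a, ha, b, hb, hab⟩ := hedge hvw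
    exact ⟨(a, b), ha, hb, hab⟩
  choose F hF1 hF2 hF3 using key
  let e := Fintype.equivFin α
  let F' : ∀ v w, G.Adj v w → β × β := fun v w h =>
    if e v < e w then F v w h else ((F w v h.symm).2, (F w v h.symm).1)
  have hF'1 : ∀ v w (h : G.Adj v w), (F' v w h).1 ∈ B v := by
    intro v w h
    by_cases hlt : e v < e w <;> simp only [F', hlt, if_true, if_false]
    · exact hF1 v w h
    · exact hF2 w v h.symm
  have hF'2 : ∀ v w (h : G.Adj v w), (F' v w h).2 ∈ B w := by
    intro v w h
    by_cases hlt : e v < e w <;> simp only [F', hlt, if_true, if_false]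
    · exact hF2 v w h
    · exact hF1 w v h.symm
  have hF'3 : ∀ v w (h : G.Adj v w), H.Adj (F' v w h).1 (F' v w h).2 := by
    intro v w h
    by_cases hlt : e v < e w <;> simp only [F', hlt, if_true, if_false]
    · exact hF3 v w h
    · exact (hF3 w v h.symm).symm
  have hFsymm : ∀ v w (h : G.Adj v w), (F' w v h.symm).1 = (F' v w h).2 := by
    intro v w h
    have hne' : e v ≠ e w := fun hh => h.ne (e.injective hh)
    by_cases hlt : e v < e w
    · have : ¬ e w < e v := asymm hlt
      simp only [F', hlt, this, if_true, if_false]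
    · have : e w < e v := (hne'.lt_or_gt).resolve_left hlt
      simp only [F', hlt, this, if_true, if_false]
  -- shortest paths from centers to edge endpoints
  have hpath : ∀ v w (h : G.Adj v w),
      ∃ p : (H.induce (B v)).Walk ⟨c v, hc v⟩ ⟨(F' v w h).1, hF'1 v w h⟩, p.length ≤ r := by
    intro v w h
    obtain ⟨p, hp⟩ :=
      ((hconn v) ⟨c v, hc v⟩ ⟨(F' v w h).1, hF'1 v w h⟩).exists_walk_length_eq_dist
    exact ⟨p, hp ▸ hcd v _ _⟩
  choose p hp using hpath
  -- the small branch sets, as finsets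
  let g : ∀ v w, Finset β := fun v w =>
    if h : G.Adj v w then ((p v w h).support.tail.map Subtype.val).toFinset else ∅
  let Bf : α → Finset β := fun v => insert (c v) ((G.neighborFinset v).biUnion (g v))
  have hcBf : ∀ v, c v ∈ (Bf v : Set β) := by
    intro v; simp [Bf]
  -- every support vertex is in Bf
  have hBc : ∀ v w (h : G.Adj v w), ∀ x ∈ (p v w h).support, (x : β) ∈ (Bf v : Set β) := by
    intro v w h x hx
    rw [(p v w h).support_eq_cons] at hx
    rcases List.mem_cons.mp hx with rfl | hx'
    · simp [Bf]
    · have hw : w ∈ G.neighborFinset v := by simpa using h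
      have : (x : β) ∈ g v w := by
        simp only [g, dif_pos h, List.mem_toFinset, List.mem_map]
        exact ⟨x, hx', rfl⟩
      simp only [Bf, Finset.coe_insert, Set.mem_insert_iff]
      exact Or.inr (by exact Finset.mem_coe.mpr (Finset.mem_biUnion.mpr ⟨w, hw, this⟩))
  -- Bf v ⊆ B v
  have hBfB : ∀ v, (Bf v : Set β) ⊆ B v := by
    intro v x hx
    simp only [Bf, Finset.coe_insert, Set.mem_insert_iff, Finset.mem_coe,
      Finset.mem_biUnion] at hx
    rcases hx with rfl | ⟨w, hw, hx⟩
    · exact hc v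
    · have h : G.Adj v w := by simpa using hw
      simp only [g, dif_pos h, List.mem_toFinset, List.mem_map] at hx
      obtain ⟨y, hy, rfl⟩ := hx
      exact y.2
  -- walks from the center inside Bf
  have hreach : ∀ v (u : β) (hu : u ∈ (Bf v : Set β)),
      ∃ P : (H.induce (↑(Bf v) : Set β)).Walk ⟨c v, hcBf v⟩ ⟨u, hu⟩, P.length ≤ r := by
    intro v u hu
    have hu' := hu
    simp only [Bf, Finset.coe_insert, Set.mem_insert_iff, Finset.mem_coe,
      Finset.mem_biUnion] at hu'
    rcases hu' with rfl | ⟨w, hw, hx⟩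
    · exact ⟨Walk.nil, by simp⟩
    · have h : G.Adj v w := by simpa using hw
      simp only [g, dif_pos h, List.mem_toFinset, List.mem_map] at hx
      obtain ⟨x, hx', rfl⟩ := hx
      have hxs : x ∈ (p v w h).support := by
        rw [(p v w h).support_eq_cons]; exact List.mem_cons_of_mem _ hx'
      let q0 := (p v w h).takeUntil x hxs
      have hq0len : q0.length ≤ r := le_trans ((p v w h).length_takeUntil_le hxs) (hp v w h)
      let P0 : H.Walk (c v) (x : β) := q0.map (Embedding.induce (B v)).toHom
      have hP0sup : ∀ z ∈ P0.support, z ∈ (Bf v : Set β) := by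
        intro z hz
        have hz := (congrArg (z ∈ ·) (Walk.support_map (Embedding.induce (B v)).toHom q0)).mp hz
        obtain ⟨y, hy, rfl⟩ := List.mem_map.mp hz
        exact hBc v w h y ((p v w h).support_takeUntil_subset hxs hy)
      obtain ⟨P, hPlen⟩ := walk_transfer P0 hP0sup (hcBf v) hu
      refine ⟨P, ?_⟩
      rw [hPlen]
      exact (Walk.length_map _ _).trans_le hq0len
  -- properties of the branch sets
  have hne' : ∀ v, ((Bf v : Set β)).Nonempty := fun v => ⟨c v, hcBf v⟩
  have hdisj' : Pairwise fun v w => Disjoint ((Bf v : Set β)) ((Bf w : Set β)) :=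
    fun v w hvw => (hdisj hvw).mono (hBfB v) (hBfB w)
  have hconn' : ∀ v, (H.induce (↑(Bf v) : Set β)).Connected := by
    intro v
    rw [connected_iff]
    refine ⟨?_, ⟨⟨c v, hcBf v⟩⟩⟩
    intro x y
    obtain ⟨Px, -⟩ := hreach v x.1 x.2
    obtain ⟨Py, -⟩ := hreach v y.1 y.2
    exact (Walk.reachable Px).symm.trans (Walk.reachable Py)
  have hrad' : ∀ v, ∃ cc : β, ∃ hcc : cc ∈ (Bf v : Set β), ∀ u : β,
      ∀ hu : u ∈ (Bf v : Set β),
      (H.induce (↑(Bf v) : Set β)).dist ⟨cc, hcc⟩ ⟨u, hu⟩ ≤ r := by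
    intro v
    refine ⟨c v, hcBf v, fun u hu => ?_⟩
    obtain ⟨P, hP⟩ := hreach v u hu
    exact le_trans (dist_le P) hP
  have hedge' : ∀ ⦃v w⦄, G.Adj v w →
      ∃ a ∈ (Bf v : Set β), ∃ b ∈ (Bf w : Set β), H.Adj a b := by
    intro v w hvw
    refine ⟨(F' v w hvw).1, ?_, (F' v w hvw).2, ?_, hF'3 v w hvw⟩
    · exact hBc v w hvw _ (p v w hvw).end_mem_support
    · rw [← hFsymm v w hvw]
      exact hBc w v hvw.symm _ (p w v hvw.symm).end_mem_support
  -- cardinality bound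
  have hcard : ∀ v, (Bf v).card ≤ 1 + r * G.degree v := by
    intro v
    refine le_trans (Finset.card_insert_le _ _) ?_
    rw [Nat.add_comm]
    refine Nat.add_le_add_left ?_ 1
    refine le_trans (Finset.card_biUnion_le) ?_
    have : ∀ w ∈ G.neighborFinset v, (g v w).card ≤ r := by
      intro w hw
      have h : G.Adj v w := by simpa using hw
      simp only [g, dif_pos h]
      refine le_trans (List.toFinset_card_le _) ?_
      rw [List.length_map]
      have h2 := (p v w h).length_support
      have htail : (p v w h).support.tail.length ≤ (p v w h).length := by
        rw [(p v w h).support_eq_cons] at h2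
        simp only [List.length_cons] at h2
        omega
      exact le_trans htail (hp v w h)
    calc ∑ w ∈ G.neighborFinset v, (g v w).card ≤ ∑ _w ∈ G.neighborFinset v, r :=
          Finset.sum_le_sum this
      _ = G.degree v * r := by rw [Finset.sum_const, smul_eq_mul]; rfl
      _ = r * G.degree v := Nat.mul_comm _ _
  let T : Finset β := Finset.univ.biUnion Bf
  have hT : T.card ≤ n + 2 * r * m := by
    calc T.card ≤ ∑ v, (Bf v).card := Finset.card_biUnion_le
      _ ≤ ∑ v, (1 + r * G.degree v) := Finset.sum_le_sum (fun v _ => hcard v)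
      _ = Fintype.card α + r * ∑ v, G.degree v := by
          rw [Finset.sum_add_distrib, ← Finset.mul_sum]
          simp only [Finset.sum_const, smul_eq_mul, mul_one, Finset.card_univ]
      _ = n + 2 * r * m := by
          rw [hn, G.sum_degrees_eq_twice_card_edges, hm]; ring
  -- the vertex set of Q
  refine ⟨↑(T.image Prod.fst), ?_, ?_⟩
  · rw [Set.ncard_coe_finset]
    exact le_trans (Finset.card_image_le) hT
  · set s : Set γ := ↑(T.image Prod.fst) with hs
    have hsub : ∀ v, (Bf v : Set β) ⊆ {pp : γ × Fin ℓ | pp.1 ∈ s} := by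
      intro v x hx
      have hxT : x ∈ T := Finset.mem_biUnion.mpr ⟨v, Finset.mem_univ v, hx⟩
      exact Finset.mem_coe.mpr (Finset.mem_image_of_mem Prod.fst hxT)
    have step1 : IsShallowMinor r G (H.induce {pp : γ × Fin ℓ | pp.1 ∈ s}) :=
      isShallowMinor_induce (fun v => (Bf v : Set β)) hsub hne' hdisj' hconn' hrad' hedge'
    exact isShallowMinor_of_iso (strongProdInduceIso Q (completeGraph (Fin ℓ)) s).symm step1
end
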